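/- Let n ≥ 1, let j₁, …, j_n ∈ {−m, …, m} and let k, ℓ ∈ {−m, …, m} with |k − ℓ| = 1. Then G_{j₁⋯j_n k} ∩ G_{j₁⋯j_n ℓ} is a single point if and only if |ε| = p^{n+1}. -/

import Mathlib

noncomputable section

/-- `b_j = ε` if `j` is odd and `b_j = 0` if `j` is even. -/
def bshift (ε : ℝ) (j : ℤ) : ℝ := if Odd j then ε else 0

/-- The self-similar set `T_ε` associated with `p = 2m+1` and the shift `ε`. -/
def Tset (p : ℤ) (m : ℕ) (ε : ℝ) : Set (ℝ × ℝ) :=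
  { z | ∃ i j : ℕ → ℤ, (∀ k, |i k| ≤ (m : ℤ)) ∧ (∀ k, |j k| ≤ (m : ℤ)) ∧
      z.1 = ∑' k : ℕ, ((p : ℝ) ^ (k + 1))⁻¹ * ((i k : ℝ) + bshift ε (j k)) ∧
      z.2 = ∑' k : ℕ, ((p : ℝ) ^ (k + 1))⁻¹ * (j k : ℝ) }

/-- The map `f_{i,j}(x, y) = ((x + i + b_j)/p, (y + j)/p)`. -/
def fmap (p : ℤ) (ε : ℝ) (i j : ℤ) (z : ℝ × ℝ) : ℝ × ℝ :=
  ((z.1 + (i : ℝ) + bshift ε j) / (p : ℝ), (z.2 + (j : ℝ)) / (p : ℝ))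

/-- For a word `j₁ ⋯ j_n` (a list of integers in `{-m, …, m}`),
`G_{j₁⋯j_n} = ⋃_{i₁,…,i_n ∈ {-m,…,m}} f_{i₁,j₁} ∘ ⋯ ∘ f_{i_n,j_n}(T_ε)`. -/
def Gset (p : ℤ) (m : ℕ) (ε : ℝ) : List ℤ → Set (ℝ × ℝ)
  | [] => Tset p m ε
  | j :: w => ⋃ i ∈ Finset.Icc (-(m : ℤ)) (m : ℤ), fmap p ε i j '' Gset p m ε w

/-!
Separating the horizontal digits `i_k` from the vertical digits `j_k`: balanced base-`p` expansions
with digits in `{-m, …, m}` fill exactly `[-1/2, 1/2]`, so `T_ε` is the union, over all vertical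
digit sequences `J`, of the horizontal unit segment at height `∑ J_t p^{-t-1}` centred at
`∑ b_{J_t} p^{-t-1}`; and `G_w` is the same union over the `J` that begin with `w`.
Two segments coming from `w k …` and `w l …` with `k = l + 1` lie on one line only if the tails
are constantly `-m` and `m`, because digit sums of tails differ by at most `2m/(p-1) = 1`.
So the intersection is that of two unit segments whose centres are `|b_k - b_l| / p^{n+1} =
|ε| / p^{n+1}` apart, and it is a single point exactly when that distance is `1`.
-/

open scoped Stream'

def digitSum (P : ℝ) (a : Stream' ℝ) : ℝ := ∑' t, (P ^ (t + 1))⁻¹ * a.get t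

section digitSum

variable {P : ℝ} {a b : Stream' ℝ}

lemma inv_pow_succ_eq_mul (P : ℝ) (t : ℕ) : (P ^ (t + 1))⁻¹ = P⁻¹ * P⁻¹ ^ t := by
  rw [pow_succ', mul_inv, inv_pow]

lemma summable_inv_pow_succ (hP : 1 < P) : Summable fun t : ℕ => (P ^ (t + 1))⁻¹ := by
  simp_rw [inv_pow_succ_eq_mul]
  exact (summable_geometric_of_lt_one (by positivity) (inv_lt_one_of_one_lt₀ hP)).mul_left _

lemma summable_digitSeries (hP : 1 < P) {C : ℝ} (ha : ∀ t, |a.get t| ≤ C) :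
    Summable fun t => (P ^ (t + 1))⁻¹ * a.get t := by
  refine ((summable_inv_pow_succ hP).mul_right C).of_norm_bounded fun t => ?_
  rw [Real.norm_eq_abs, abs_mul, abs_of_pos (by positivity)]
  exact mul_le_mul_of_nonneg_left (ha t) (by positivity)

lemma summable_digitSeries_const (hP : 1 < P) (c : ℝ) :
    Summable fun t => (P ^ (t + 1))⁻¹ * (Stream'.const c).get t :=
  (summable_inv_pow_succ hP).mul_right c

lemma digitSum_const (hP : 1 < P) (c : ℝ) : digitSum P (Stream'.const c) = c / (P - 1) := by
  simp_rw [digitSum, Stream'.get_const, inv_pow_succ_eq_mul]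
  rw [tsum_mul_right, tsum_mul_left, tsum_geometric_of_lt_one (by positivity)
    (inv_lt_one_of_one_lt₀ hP)]
  field_simp

lemma digitSum_zip_add (ha : Summable fun t => (P ^ (t + 1))⁻¹ * a.get t)
    (hb : Summable fun t => (P ^ (t + 1))⁻¹ * b.get t) :
    digitSum P (Stream'.zip (· + ·) a b) = digitSum P a + digitSum P b := by
  simp_rw [digitSum, Stream'.get_zip, mul_add]
  exact ha.tsum_add hb

lemma digitSum_zip_sub (ha : Summable fun t => (P ^ (t + 1))⁻¹ * a.get t)
    (hb : Summable fun t => (P ^ (t + 1))⁻¹ * b.get t) :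
    digitSum P (Stream'.zip (· - ·) a b) = digitSum P a - digitSum P b := by
  simp_rw [digitSum, Stream'.get_zip, mul_sub]
  exact ha.tsum_sub hb

lemma digitSum_le_digitSum (hP : 1 < P) (ha : Summable fun t => (P ^ (t + 1))⁻¹ * a.get t)
    (hb : Summable fun t => (P ^ (t + 1))⁻¹ * b.get t) (hab : ∀ t, a.get t ≤ b.get t) :
    digitSum P a ≤ digitSum P b :=
  ha.tsum_le_tsum (fun t => mul_le_mul_of_nonneg_left (hab t) (by positivity)) hb

lemma digitSum_lt_digitSum (hP : 1 < P) (ha : Summable fun t => (P ^ (t + 1))⁻¹ * a.get t)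
    (hb : Summable fun t => (P ^ (t + 1))⁻¹ * b.get t) (hab : ∀ t, a.get t ≤ b.get t) {t : ℕ}
    (ht : a.get t < b.get t) : digitSum P a < digitSum P b :=
  ha.tsum_lt_tsum (fun s => mul_le_mul_of_nonneg_left (hab s) (by positivity))
    (mul_lt_mul_of_pos_left ht (by positivity)) hb

lemma abs_digitSum_le (hP : 1 < P) {C : ℝ} (ha : ∀ t, |a.get t| ≤ C) :
    |digitSum P a| ≤ C / (P - 1) := by
  rw [abs_le, ← neg_div, ← digitSum_const hP, ← digitSum_const hP]
  exact ⟨digitSum_le_digitSum hP (summable_digitSeries_const hP _) (summable_digitSeries hP ha)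
      fun t => (abs_le.1 (ha t)).1,
    digitSum_le_digitSum hP (summable_digitSeries hP ha) (summable_digitSeries_const hP _)
      fun t => (abs_le.1 (ha t)).2⟩

lemma get_eq_of_digitSum_eq (hP : 1 < P) {C : ℝ} (ha : ∀ t, |a.get t| ≤ C)
    (h : digitSum P a = C / (P - 1)) (t : ℕ) : a.get t = C := by
  by_contra hne
  have := digitSum_lt_digitSum hP (summable_digitSeries hP ha) (summable_digitSeries_const hP C)
    (fun s => le_of_abs_le (ha s)) (lt_of_le_of_ne (le_of_abs_le (ha t)) hne)
  rw [digitSum_const hP, h] at this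
  exact lt_irrefl _ this

lemma summable_digitSeries_cons (ha : Summable fun t => (P ^ (t + 1))⁻¹ * a.get t) (c : ℝ) :
    Summable fun t => (P ^ (t + 1))⁻¹ * (c :: a).get t := by
  rw [← summable_nat_add_iff 1]
  simpa only [Stream'.get_succ_cons, pow_succ' P (_ + 1), mul_inv, mul_assoc] using ha.mul_left P⁻¹

lemma digitSum_cons (ha : Summable fun t => (P ^ (t + 1))⁻¹ * a.get t) (c : ℝ) :
    digitSum P (c :: a) = (c + digitSum P a) / P := by
  rw [digitSum, tsum_eq_zero_add' ((summable_nat_add_iff 1).2 (summable_digitSeries_cons ha c))]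
  simp only [Stream'.get_succ_cons, Stream'.get_zero_cons, pow_succ' P (_ + 1), mul_inv,
    mul_assoc, tsum_mul_left, digitSum]
  ring

lemma summable_digitSeries_appendStream (ha : Summable fun t => (P ^ (t + 1))⁻¹ * a.get t)
    (l : List ℝ) : Summable fun t => (P ^ (t + 1))⁻¹ * (l ++ₛ a).get t := by
  induction l with
  | nil => exact ha
  | cons c l ih => exact summable_digitSeries_cons ih c

lemma digitSum_appendStream_sub (ha : Summable fun t => (P ^ (t + 1))⁻¹ * a.get t)
    (hb : Summable fun t => (P ^ (t + 1))⁻¹ * b.get t) (l : List ℝ) :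
    digitSum P (l ++ₛ a) - digitSum P (l ++ₛ b) =
      (P ^ l.length)⁻¹ * (digitSum P a - digitSum P b) := by
  induction l with
  | nil => simp [Stream'.nil_append_stream]
  | cons c l ih =>
    rw [Stream'.cons_append_stream, Stream'.cons_append_stream,
      digitSum_cons (summable_digitSeries_appendStream ha l),
      digitSum_cons (summable_digitSeries_appendStream hb l), List.length_cons, pow_succ', mul_inv,
      mul_assoc, ← ih]
    ring

lemma digitSum_appendStream_cons_eq_iff (hP : P ≠ 0)
    (ha : Summable fun t => (P ^ (t + 1))⁻¹ * a.get t)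
    (hb : Summable fun t => (P ^ (t + 1))⁻¹ * b.get t) (l : List ℝ) (c d : ℝ) :
    digitSum P (l ++ₛ (c :: a)) = digitSum P (l ++ₛ (d :: b)) ↔
      digitSum P b - digitSum P a = c - d := by
  rw [← sub_eq_zero, digitSum_appendStream_sub (summable_digitSeries_cons ha c)
    (summable_digitSeries_cons hb d), digitSum_cons ha, digitSum_cons hb, mul_eq_zero,
    or_iff_right (by simp [hP]), ← sub_div, div_eq_zero_iff, or_iff_left hP]
  constructor <;> intro h <;> linarith

end digitSum

section intStream

variable {m : ℕ} {P : ℝ}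

lemma one_lt_of_eq_two_mul_add_one (hm : 1 ≤ m) (hP : P = 2 * m + 1) : 1 < P := by
  rw [hP]
  linarith [show (1 : ℝ) ≤ m by exact_mod_cast hm]

lemma abs_get_map_intCast_le {J : Stream' ℤ} (hJ : ∀ t, |J.get t| ≤ m) (t : ℕ) :
    |(J.map ((↑) : ℤ → ℝ)).get t| ≤ m := by
  rw [Stream'.get_map, ← Int.cast_abs]
  exact_mod_cast hJ t

lemma summable_digitSeries_intCast (hP : 1 < P) {J : Stream' ℤ} (hJ : ∀ t, |J.get t| ≤ m) :
    Summable fun t => (P ^ (t + 1))⁻¹ * (J.map ((↑) : ℤ → ℝ)).get t :=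
  summable_digitSeries hP (abs_get_map_intCast_le hJ)

lemma exists_abs_le_abs_sub_le_half {v : ℝ} (hv : |v| ≤ m + 1 / 2) :
    ∃ i : ℤ, |i| ≤ m ∧ |v - i| ≤ 1 / 2 := by
  rw [abs_le] at hv
  rcases le_or_gt (m : ℝ) v with hmv | hvm
  · exact ⟨m, by simp, by rw [abs_le]; push_cast; constructor <;> linarith⟩
  rcases le_or_gt v (-m) with hvm' | hmv'
  · exact ⟨-m, by simp, by rw [abs_le]; push_cast; constructor <;> linarith⟩
  refine ⟨round v, ?_, abs_sub_round v⟩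
  have hr := abs_le.1 (abs_sub_round v)
  have h1 : -(m : ℝ) - 1 < round v := by linarith
  have h2 : (round v : ℝ) < m + 1 := by linarith
  have h1' : -(m : ℤ) - 1 < round v := by exact_mod_cast h1
  have h2' : round v < (m : ℤ) + 1 := by exact_mod_cast h2
  rw [abs_le]
  omega

lemma exists_digitSum_eq (hm : 1 ≤ m) (hP : P = 2 * m + 1) {x : ℝ}
    (hx : |x| ≤ 1 / 2) : ∃ i : Stream' ℤ, (∀ t, |i.get t| ≤ m) ∧ digitSum P (i.map (↑)) = x := by
  have hP1 := one_lt_of_eq_two_mul_add_one hm hP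
  subst hP
  -- shift a standard base-`P` expansion of `x + 1/2` by the digit sum `1/2` of the constant `m`
  obtain ⟨e, -, he⟩ := Real.ofDigits_SurjOn (b := 2 * m + 1) (by omega)
    (show x + 1 / 2 ∈ Set.Icc 0 1 by constructor <;> linarith [(abs_le.1 hx).1, (abs_le.1 hx).2])
  let i : Stream' ℤ := fun t => (e t : ℤ) - m
  have hi : ∀ t, |i.get t| ≤ m := fun t => by
    have := (e t).isLt
    simp only [Stream'.get, i, abs_le]
    omega
  refine ⟨i, hi, ?_⟩
  have hsum : digitSum (2 * m + 1) (Stream'.zip (· + ·) (i.map (↑)) (Stream'.const (m : ℝ))) =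
      x + 1 / 2 := by
    rw [← he, Real.ofDigits, digitSum]
    refine tsum_congr fun t => ?_
    rw [Stream'.get_zip, Stream'.get_map, Stream'.get_const]
    simp only [Real.ofDigitsTerm, Stream'.get, i]
    push_cast
    ring
  rw [digitSum_zip_add (summable_digitSeries_intCast hP1 hi) (summable_digitSeries_const hP1 _),
    digitSum_const hP1] at hsum
  have : (m : ℝ) / (2 * m + 1 - 1) = 1 / 2 := by field_simp; ring
  linarith

end intStream

lemma abs_bshift_le (ε : ℝ) (j : ℤ) : |bshift ε j| ≤ |ε| := by
  unfold bshift
  split_ifs <;> simp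

lemma bshift_neg (ε : ℝ) (j : ℤ) : bshift ε (-j) = bshift ε j := by
  simp only [bshift, odd_neg]

lemma abs_bshift_add_one_sub (ε : ℝ) (l : ℤ) : |bshift ε (l + 1) - bshift ε l| = |ε| := by
  rcases Int.even_or_odd l with hl | hl
  · simp [bshift, hl.add_one, Int.not_odd_iff_even.2 hl]
  · simp [bshift, hl, Int.not_odd_iff_even.2 hl.add_one]

def digitSegment (P ε : ℝ) (J : Stream' ℤ) : Set (ℝ × ℝ) :=
  Metric.closedBall (digitSum P (J.map (bshift ε))) (1 / 2) ×ˢ {digitSum P (J.map (↑))}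

section digitSegment

variable {m : ℕ} {P ε : ℝ}

lemma summable_digitSeries_bshift (hP : 1 < P) (J : Stream' ℤ) :
    Summable fun t => (P ^ (t + 1))⁻¹ * (J.map (bshift ε)).get t :=
  summable_digitSeries hP fun _ => abs_bshift_le ε _

lemma summable_digitSeries_map_appendStream {f : ℤ → ℝ} {s : Stream' ℤ}
    (hs : Summable fun t => (P ^ (t + 1))⁻¹ * (s.map f).get t) (w : List ℤ) :
    Summable fun t => (P ^ (t + 1))⁻¹ * ((w ++ₛ s).map f).get t := by
  rw [Stream'.map_append_stream]
  exact summable_digitSeries_appendStream hs _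

lemma iUnion_image_fmap_digitSegment (hm : 1 ≤ m) {p : ℤ} (hp : (p : ℝ) = 2 * m + 1) (j : ℤ)
    {J : Stream' ℤ} (hJ : Summable fun t => ((p : ℝ) ^ (t + 1))⁻¹ * (J.map ((↑) : ℤ → ℝ)).get t) :
    ⋃ i ∈ Finset.Icc (-(m : ℤ)) m, fmap p ε i j '' digitSegment p ε J =
      digitSegment p ε (j :: J) := by
  have hP := one_lt_of_eq_two_mul_add_one hm hp
  have hP0 : (0 : ℝ) < p := by linarith
  ext ⟨x, y⟩
  simp only [digitSegment, Stream'.map_cons, digitSum_cons (summable_digitSeries_bshift hP J),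
    digitSum_cons hJ, Set.mem_iUnion, Set.mem_image, Set.mem_prod, Metric.mem_closedBall,
    Real.dist_eq, Set.mem_singleton_iff, Finset.mem_Icc, exists_prop, Prod.exists, fmap,
    Prod.mk.injEq]
  set β := digitSum p (J.map (bshift ε))
  set γ := digitSum p (J.map ((↑) : ℤ → ℝ))
  constructor
  · rintro ⟨i, hi, x', y', ⟨hx', rfl⟩, rfl, rfl⟩
    refine ⟨?_, by ring⟩
    have hi' : |(i : ℝ)| ≤ m := by rw [← Int.cast_abs]; exact_mod_cast abs_le.2 hi
    rw [← sub_div, abs_div, abs_of_pos hP0, div_le_iff₀ hP0]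
    calc |x' + i + bshift ε j - (bshift ε j + β)| = |(x' - β) + i| := by ring_nf
      _ ≤ |x' - β| + |(i : ℝ)| := abs_add_le _ _
      _ ≤ 1 / 2 * p := by linarith
  · rintro ⟨hx, rfl⟩
    have hv : |p * x - bshift ε j - β| ≤ m + 1 / 2 := by
      rw [show p * x - bshift ε j - β = p * (x - (bshift ε j + β) / p) by field_simp; ring,
        abs_mul, abs_of_pos hP0]
      calc p * |x - (bshift ε j + β) / p| ≤ p * (1 / 2) := by gcongr
        _ = m + 1 / 2 := by rw [hp]; ring
    obtain ⟨i, hi, hxi⟩ := exists_abs_le_abs_sub_le_half hv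
    refine ⟨i, abs_le.1 hi, p * x - i - bshift ε j, γ, ⟨?_, rfl⟩, ?_, by ring⟩
    · rw [show p * x - i - bshift ε j - β = p * x - bshift ε j - β - i by ring]
      exact hxi
    · field_simp
      ring

end digitSegment

section Gset

variable {m : ℕ} {p : ℤ} (ε : ℝ)

lemma Tset_eq_iUnion (hm : 1 ≤ m) (hp : (p : ℝ) = 2 * m + 1) :
    Tset p m ε = ⋃ (J : Stream' ℤ) (_ : ∀ t, |J.get t| ≤ m), digitSegment p ε J := by
  have hP := one_lt_of_eq_two_mul_add_one hm hp
  ext ⟨x, y⟩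
  simp only [Tset, digitSegment, Set.mem_ofPred_eq, Set.mem_iUnion, Set.mem_prod,
    Metric.mem_closedBall, Real.dist_eq, Set.mem_singleton_iff, exists_prop]
  constructor
  · rintro ⟨i, J, hi, hJ, rfl, rfl⟩
    refine ⟨J, hJ, ?_, rfl⟩
    change |digitSum p (Stream'.zip (· + ·) (Stream'.map (↑) i) (Stream'.map (bshift ε) J)) - _| ≤ _
    rw [digitSum_zip_add (summable_digitSeries_intCast hP hi) (summable_digitSeries_bshift hP J),
      add_sub_cancel_right]
    calc _ ≤ m / ((p : ℝ) - 1) := abs_digitSum_le hP (abs_get_map_intCast_le hi)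
      _ = 1 / 2 := by rw [hp]; field_simp; ring
  · rintro ⟨J, hJ, hx, rfl⟩
    obtain ⟨i, hi, hix⟩ := exists_digitSum_eq hm hp hx
    refine ⟨i, J, hi, hJ, ?_, rfl⟩
    change x = digitSum p (Stream'.zip (· + ·) (Stream'.map (↑) i) (Stream'.map (bshift ε) J))
    rw [digitSum_zip_add (summable_digitSeries_intCast hP hi) (summable_digitSeries_bshift hP J),
      hix, sub_add_cancel]

lemma Gset_eq_iUnion (hm : 1 ≤ m) (hp : (p : ℝ) = 2 * m + 1) (w : List ℤ) :
    Gset p m ε w = ⋃ (s : Stream' ℤ) (_ : ∀ t, |s.get t| ≤ m), digitSegment p ε (w ++ₛ s) := by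
  have hP := one_lt_of_eq_two_mul_add_one hm hp
  induction w with
  | nil => exact Tset_eq_iUnion ε hm hp
  | cons j w ih =>
    have hcons : ∀ s : Stream' ℤ, (∀ t, |s.get t| ≤ m) → digitSegment p ε ((j :: w) ++ₛ s) =
        ⋃ i ∈ Finset.Icc (-(m : ℤ)) m, fmap p ε i j '' digitSegment p ε (w ++ₛ s) := fun s hs =>
      (iUnion_image_fmap_digitSegment hm hp j
        (summable_digitSeries_map_appendStream (summable_digitSeries_intCast hP hs) w)).symm
    ext z
    simp only [Gset, ih, Set.image_iUnion, Set.mem_iUnion]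
    constructor
    · rintro ⟨i, hi, s, hs, hz⟩
      exact ⟨s, hs, hcons s hs ▸ Set.mem_biUnion hi hz⟩
    · rintro ⟨s, hs, hz⟩
      obtain ⟨i, hi, hz⟩ := Set.mem_iUnion₂.1 (hcons s hs ▸ hz)
      exact ⟨i, hi, s, hs, hz⟩

end Gset

lemma exists_closedBall_inter_closedBall_eq_singleton_iff {a b r : ℝ} :
    (∃ x, Metric.closedBall a r ∩ Metric.closedBall b r = {x}) ↔ |a - b| = 2 * r := by
  simp only [Real.closedBall_eq_Icc, Set.Icc_inter_Icc, Set.Icc_eq_singleton_iff,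
    exists_eq_left', max_sub_sub_right, min_add_add_right]
  rw [← max_sub_min_eq_abs']
  constructor <;> intro h <;> linarith

lemma exists_prod_singleton_eq_singleton_iff {α β : Type*} {s : Set α} {b : β} :
    (∃ z, s ×ˢ {b} = {z}) ↔ ∃ a, s = {a} := by
  constructor
  · rintro ⟨z, hz⟩
    refine ⟨z.1, ?_⟩
    rw [← Set.fst_image_prod s (Set.singleton_nonempty b), hz, Set.image_singleton]
  · rintro ⟨a, rfl⟩
    exact ⟨(a, b), Set.singleton_prod_singleton⟩

lemma exists_digitSegment_inter_eq_singleton_iff {P ε : ℝ} {J J' : Stream' ℤ}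
    (hy : digitSum P (J.map (↑)) = digitSum P (J'.map (↑))) :
    (∃ z, digitSegment P ε J ∩ digitSegment P ε J' = {z}) ↔
      |digitSum P (J.map (bshift ε)) - digitSum P (J'.map (bshift ε))| = 1 := by
  rw [digitSegment, digitSegment, Set.prod_inter_prod, hy, Set.inter_self,
    exists_prod_singleton_eq_singleton_iff, exists_closedBall_inter_closedBall_eq_singleton_iff]
  norm_num

section tails

variable {m : ℕ} {P : ℝ}

lemma digitSum_sub_eq_one_iff (hm : 1 ≤ m) (hP : P = 2 * m + 1) {s s' : Stream' ℤ}
    (hs : ∀ t, |s.get t| ≤ m) (hs' : ∀ t, |s'.get t| ≤ m) :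
    digitSum P (s'.map (↑)) - digitSum P (s.map (↑)) = 1 ↔
      s = Stream'.const (-(m : ℤ)) ∧ s' = Stream'.const (m : ℤ) := by
  have hP1 := one_lt_of_eq_two_mul_add_one hm hP
  have hdiv : 2 * (m : ℝ) / (P - 1) = 1 := by rw [hP]; field_simp; ring
  constructor
  · intro h
    rw [← digitSum_zip_sub (summable_digitSeries_intCast hP1 hs')
      (summable_digitSeries_intCast hP1 hs), ← hdiv] at h
    -- the digit differences are at most `2m`, and the sum `1 = 2m/(P-1)` forces equality
    have hmax := get_eq_of_digitSum_eq hP1 (fun t => by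
      rw [Stream'.get_zip]
      exact (abs_sub _ _).trans
        (by linarith [abs_get_map_intCast_le hs t, abs_get_map_intCast_le hs' t])) h
    have hst : ∀ t, s'.get t - s.get t = 2 * m := fun t => by
      have := hmax t
      simp only [Stream'.get_zip, Stream'.get_map] at this
      exact_mod_cast this
    refine ⟨Stream'.ext fun t => ?_, Stream'.ext fun t => ?_⟩ <;>
    · have := abs_le.1 (hs t); have := abs_le.1 (hs' t); have := hst t
      rw [Stream'.get_const]; omega
  · rintro ⟨rfl, rfl⟩
    rw [Stream'.map_const, Stream'.map_const, digitSum_const hP1, digitSum_const hP1]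
    push_cast
    exact Eq.trans (by ring) hdiv

lemma digitSum_append_cons_eq_iff (hm : 1 ≤ m) (hP : P = 2 * m + 1) (w : List ℤ) {k l : ℤ}
    (hkl : k = l + 1) {s s' : Stream' ℤ} (hs : ∀ t, |s.get t| ≤ m) (hs' : ∀ t, |s'.get t| ≤ m) :
    digitSum P ((w ++ₛ (k :: s)).map (↑)) = digitSum P ((w ++ₛ (l :: s')).map (↑)) ↔
      s = Stream'.const (-(m : ℤ)) ∧ s' = Stream'.const (m : ℤ) := by
  have hP1 := one_lt_of_eq_two_mul_add_one hm hP
  rw [Stream'.map_append_stream, Stream'.map_append_stream, Stream'.map_cons, Stream'.map_cons,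
    digitSum_appendStream_cons_eq_iff (by positivity) (summable_digitSeries_intCast hP1 hs)
      (summable_digitSeries_intCast hP1 hs'), hkl, ← digitSum_sub_eq_one_iff hm hP hs hs']
  push_cast
  ring_nf

lemma abs_digitSum_bshift_append_sub (hP : 1 < P) (ε : ℝ) (w : List ℤ) {k l : ℤ}
    (hkl : k = l + 1) :
    |digitSum P ((w ++ₛ (k :: Stream'.const (-(m : ℤ)))).map (bshift ε)) -
        digitSum P ((w ++ₛ (l :: Stream'.const (m : ℤ))).map (bshift ε))| =
      |ε| / P ^ (w.length + 1) := by
  have hP0 : 0 < P := by linarith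
  have hc := summable_digitSeries_const hP (bshift ε m)
  rw [Stream'.map_append_stream, Stream'.map_append_stream,
    digitSum_appendStream_sub (summable_digitSeries_bshift hP _) (summable_digitSeries_bshift hP _),
    Stream'.map_cons, Stream'.map_cons, Stream'.map_const, Stream'.map_const, bshift_neg,
    digitSum_cons hc, digitSum_cons hc, List.length_map,
    show ∀ x y c : ℝ, (P ^ w.length)⁻¹ * ((x + c) / P - (y + c) / P) = (x - y) / P ^ (w.length + 1)
      from fun x y c => by field_simp; ring,
    abs_div, abs_of_pos (pow_pos hP0 _), hkl, abs_bshift_add_one_sub]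

end tails

lemma Gset_append_inter_Gset_append {m : ℕ} {p : ℤ} (ε : ℝ) (hm : 1 ≤ m)
    (hp : (p : ℝ) = 2 * m + 1) (w : List ℤ) {k l : ℤ} (hkl : k = l + 1) :
    Gset p m ε (w ++ [k]) ∩ Gset p m ε (w ++ [l]) =
      digitSegment p ε (w ++ₛ (k :: Stream'.const (-(m : ℤ)))) ∩
        digitSegment p ε (w ++ₛ (l :: Stream'.const (m : ℤ))) := by
  rw [Gset_eq_iUnion ε hm hp, Gset_eq_iUnion ε hm hp]
  ext z
  simp only [Set.mem_inter_iff, Set.mem_iUnion, Stream'.append_append_stream,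
    Stream'.cons_append_stream, Stream'.nil_append_stream]
  constructor
  · rintro ⟨⟨s, hs, hz⟩, ⟨s', hs', hz'⟩⟩
    -- both segments lie on the same horizontal line, which forces the tails
    obtain ⟨rfl, rfl⟩ := (digitSum_append_cons_eq_iff hm hp w hkl hs hs').1
      ((Set.mem_singleton_iff.1 hz.2).symm.trans (Set.mem_singleton_iff.1 hz'.2))
    exact ⟨hz, hz'⟩
  · rintro ⟨hz, hz'⟩
    exact ⟨⟨_, fun _ => by simp [Stream'.get_const], hz⟩,
      ⟨_, fun _ => by simp [Stream'.get_const], hz'⟩⟩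

theorem stmt6_general (m : ℕ) (hm : 1 ≤ m) (p : ℤ) (hp : p = 2 * (m : ℤ) + 1) (ε : ℝ)
    (n : ℕ) (w : List ℤ) (hwlen : w.length = n) (k l : ℤ) (hkl : |k - l| = 1) :
    (∃ z : ℝ × ℝ, Gset p m ε (w ++ [k]) ∩ Gset p m ε (w ++ [l]) = {z})
      ↔ |ε| = (p : ℝ) ^ (n + 1) := by
  wlog hlk : k = l + 1 generalizing k l
  · rw [Set.inter_comm]
    refine this l k (by rwa [abs_sub_comm]) ?_
    rcases abs_eq zero_le_one |>.1 hkl with h | h <;> omega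
  have hP : (p : ℝ) = 2 * m + 1 := by rw [hp]; push_cast; ring
  have hP1 := one_lt_of_eq_two_mul_add_one hm hP
  have hy := (digitSum_append_cons_eq_iff hm hP w hlk (fun _ => by simp [Stream'.get_const])
    (fun _ => by simp [Stream'.get_const])).2 ⟨rfl, rfl⟩
  rw [Gset_append_inter_Gset_append ε hm hP w hlk, exists_digitSegment_inter_eq_singleton_iff hy,
    abs_digitSum_bshift_append_sub hP1 ε w hlk, hwlen, div_eq_one_iff_eq (by positivity)]

/-- if `|k - ℓ| = 1` then `G_{j₁⋯j_n k} ∩ G_{j₁⋯j_n ℓ}` is a single point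
if and only if `|ε| = p^(n+1)`. -/
theorem stmt6 (m : ℕ) (hm : 1 ≤ m) (p : ℤ) (hp : p = 2 * (m : ℤ) + 1) (ε : ℝ)
    (n : ℕ) (hn : 1 ≤ n) (w : List ℤ) (hwlen : w.length = n)
    (hw : ∀ j ∈ w, |j| ≤ (m : ℤ)) (k l : ℤ) (hk : |k| ≤ (m : ℤ)) (hl : |l| ≤ (m : ℤ))
    (hkl : |k - l| = 1) :
    (∃ z : ℝ × ℝ, Gset p m ε (w ++ [k]) ∩ Gset p m ε (w ++ [l]) = {z})
      ↔ |ε| = (p : ℝ) ^ (n + 1) :=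
  stmt6_general m hm p hp ε n w hwlen k l hkl
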